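/- arXiv:2209.05647 — 3 statements merged into one kernel-verified Lean document; each statement's English description precedes it below -/
import Mathlib

section
/- Let 𝒜 be a 3-order real tensor of size I₁ × J₁ × K, ℬ a 3-order real tensor of size K × J₂ × I₂, and let A ∈ ℝ^{M×J₁} and B ∈ ℝ^{M×J₂} be matrices with the same number M of rows. Then the mode-2 slices-Hadamard product of the mode-2 products equals the mode-2 product of the subchain product with the transposed Khatri-Rao matrix: (𝒜 ×₂ A) ⊛₂ (ℬ ×₂ B) = (𝒜 ⊠₂ ℬ) ×₂ (Bᵀ ⊙ Aᵀ)ᵀ, where ((Bᵀ ⊙ Aᵀ)ᵀ)(t,(j₁,j₂)) = A(t,j₁)·B(t,j₂). Equivalently, element-wise, for all i₁ ∈ [I₁], t ∈ [M], i₂ ∈ [I₂]: ∑_{k=1}^{K} (∑_{j₁=1}^{J₁} A(t,j₁) 𝒜(i₁,j₁,k)) · (∑_{j₂=1}^{J₂} B(t,j₂) ℬ(k,j₂,i₂)) = ∑_{j₁=1}^{J₁} ∑_{j₂=1}^{J₂} A(t,j₁) B(t,j₂) · (∑_{k=1}^{K} 𝒜(i₁,j₁,k) ℬ(k,j₂,i₂)).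 -/
open Finset

theorem sum_sum_mul_mul_sum_mul_eq_sum_sum_mul_sum {R ι₁ ι₂ κ : Type*} [CommSemiring R]
    [Fintype ι₁] [Fintype ι₂] [Fintype κ]
    (a : ι₁ → R) (b : ι₂ → R) (x : ι₁ → κ → R) (y : κ → ι₂ → R) :
    ∑ k, (∑ j₁, a j₁ * x j₁ k) * (∑ j₂, b j₂ * y k j₂)
      = ∑ j₁, ∑ j₂, a j₁ * b j₂ * ∑ k, x j₁ k * y k j₂ :=
  calc ∑ k, (∑ j₁, a j₁ * x j₁ k) * (∑ j₂, b j₂ * y k j₂)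
      = ∑ k, ∑ j₁, ∑ j₂, a j₁ * x j₁ k * (b j₂ * y k j₂) := by simp_rw [sum_mul_sum]
    _ = ∑ j₁, ∑ j₂, ∑ k, a j₁ * x j₁ k * (b j₂ * y k j₂) := by
      rw [sum_comm]; simp_rw [sum_comm (s := (univ : Finset κ))]
    _ = ∑ j₁, ∑ j₂, a j₁ * b j₂ * ∑ k, x j₁ k * y k j₂ := by
      simp_rw [mul_sum, mul_mul_mul_comm]

/-- Proposition 3.6 (element-wise): the mode-2 slices-Hadamard product of mode-2 products
equals the mode-2 product of the subchain product with the transposed Khatri-Rao matrix,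
`(𝒜 ×₂ A) ⊛₂ (ℬ ×₂ B) = (𝒜 ⊠₂ ℬ) ×₂ (Bᵀ ⊙ Aᵀ)ᵀ`. -/
theorem slicesHadamard_mode2_khatriRao
    (I₁ J₁ K J₂ I₂ M : ℕ)
    (𝒜 : Fin I₁ → Fin J₁ → Fin K → ℝ)
    (ℬ : Fin K → Fin J₂ → Fin I₂ → ℝ)
    (A : Fin M → Fin J₁ → ℝ) (B : Fin M → Fin J₂ → ℝ) :
    ∀ (i₁ : Fin I₁) (t : Fin M) (i₂ : Fin I₂),
      ∑ k : Fin K, (∑ j₁ : Fin J₁, A t j₁ * 𝒜 i₁ j₁ k) *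
          (∑ j₂ : Fin J₂, B t j₂ * ℬ k j₂ i₂)
        = ∑ j₁ : Fin J₁, ∑ j₂ : Fin J₂,
            A t j₁ * B t j₂ * (∑ k : Fin K, 𝒜 i₁ j₁ k * ℬ k j₂ i₂) :=
  fun i₁ t i₂ =>
    sum_sum_mul_mul_sum_mul_eq_sum_sum_mul_sum (A t) (B t) (𝒜 i₁) (fun k j₂ => ℬ k j₂ i₂)
end

section
/- Let m ≥ 1, and for n = 1,2 let H_n : [I_n] → ℤ/mℤ be arbitrary hash maps, s_n : [I_n] → ℝ arbitrary sign functions, and A : [I₁] → ℝ^{R₁×R₂}, B : [I₂] → ℝ^{R₂×R₃} families of matrices (the lateral slices of two TR-cores). Then for every t ∈ ℤ/mℤ, the t-th slice of the TensorSketch of the subchain product equals the cyclic convolution of the individual CountSketches: ∑_{(i₁,i₂) : H₁(i₁)+H₂(i₂)=t} s₁(i₁) s₂(i₂) · (A(i₁) · B(i₂)) = ∑_{t₁ ∈ ℤ/mℤ} (∑_{i₁ : H₁(i₁)=t₁} s₁(i₁) A(i₁)) · (∑_{i₂ : H₂(i₂)=t−t₁} s₂(i₂) B(i₂)), where · between matrices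 denotes matrix multiplication and the outer sums of matrices are entrywise. -/
/-!
The pairs with `H₁ i₁ + H₂ i₂ = t` split according to the value `t₁ = H₁ i₁`, and the pairs with
`H₁ i₁ = t₁` and `H₂ i₂ = t - t₁` form the product of two CountSketch fibres; bilinearity of the
matrix product turns the sum over such a product of fibres into the product of the two
CountSketches.
-/

open Finset

section CountSketch

variable {ι κ G G' R : Type*} [Fintype ι] [Fintype κ] [DecidableEq G] [DecidableEq G']

def countSketch {M : Type*} [AddCommMonoid M] [SMul R M] (h : ι → G) (s : ι → R) (f : ι → M)
    (t : G) : M :=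
  ∑ i ∈ univ.filter (fun i => h i = t), s i • f i

theorem countSketch_comp {M : Type*} [AddCommMonoid M] [SMul R M] [Fintype G] (g : G → G')
    (h : ι → G) (s : ι → R) (f : ι → M) (t' : G') :
    countSketch (g ∘ h) s f t' = ∑ t ∈ univ.filter (fun t => g t = t'), countSketch h s f t := by
  unfold countSketch
  rw [← sum_fiberwise_of_maps_to (g := h) (t := univ.filter (fun t => g t = t'))
    (fun i hi => by simpa using hi)]
  refine sum_congr rfl fun t ht => sum_congr ?_ fun _ _ => rfl
  ext i
  simp only [mem_filter, mem_univ, true_and, Function.comp_apply] at ht ⊢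
  exact ⟨And.right, fun hi => ⟨hi ▸ ht, hi⟩⟩

theorem countSketch_mul_countSketch [CommSemiring R] {l m n : Type*} [Fintype m]
    (h₁ : ι → G) (h₂ : κ → G') (s₁ : ι → R) (s₂ : κ → R)
    (A : ι → Matrix l m R) (B : κ → Matrix m n R) (a : G) (b : G') :
    countSketch h₁ s₁ A a * countSketch h₂ s₂ B b =
      countSketch (fun p : ι × κ => (h₁ p.1, h₂ p.2)) (fun p => s₁ p.1 * s₂ p.2)
        (fun p => A p.1 * B p.2) (a, b) := by
  unfold countSketch
  rw [Matrix.sum_mul]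
  simp only [Matrix.mul_sum, Matrix.smul_mul, Matrix.mul_smul, smul_smul]
  rw [← sum_product', ← filter_product, univ_product_univ]
  refine sum_congr (filter_congr fun _ _ => Prod.mk_inj.symm) fun _ _ => by rw [mul_comm]

end CountSketch

theorem sum_filter_fst_add_snd_eq {G M : Type*} [AddCommGroup G] [Fintype G] [DecidableEq G]
    [AddCommMonoid M] (F : G × G → M) (t : G) :
    ∑ u ∈ univ.filter (fun u : G × G => u.1 + u.2 = t), F u = ∑ t₁, F (t₁, t - t₁) := by
  rw [← univ_product_univ, sum_filter, sum_product]
  refine sum_congr rfl fun t₁ _ => ?_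
  simp_rw [← eq_sub_iff_add_eq']
  exact Fintype.sum_ite_eq' _ _

/-- Proposition 3.7 (algebraic content): each slice of the TensorSketch of the subchain
product equals the cyclic convolution of the individual CountSketches. -/
theorem tensorSketch_subchain_eq_cyclicConv
    (m : ℕ) [NeZero m] (I₁ I₂ R₁ R₂ R₃ : ℕ)
    (H₁ : Fin I₁ → ZMod m) (H₂ : Fin I₂ → ZMod m)
    (s₁ : Fin I₁ → ℝ) (s₂ : Fin I₂ → ℝ)
    (A : Fin I₁ → Matrix (Fin R₁) (Fin R₂) ℝ)
    (B : Fin I₂ → Matrix (Fin R₂) (Fin R₃) ℝ) :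
    ∀ t : ZMod m,
      (∑ p ∈ Finset.univ.filter (fun p : Fin I₁ × Fin I₂ => H₁ p.1 + H₂ p.2 = t),
          (s₁ p.1 * s₂ p.2) • (A p.1 * B p.2))
        = ∑ t₁ : ZMod m,
            (∑ i₁ ∈ Finset.univ.filter (fun i₁ => H₁ i₁ = t₁), s₁ i₁ • A i₁) *
            (∑ i₂ ∈ Finset.univ.filter (fun i₂ => H₂ i₂ = t - t₁), s₂ i₂ • B i₂) := by
  intro t
  change countSketch ((fun u : ZMod m × ZMod m => u.1 + u.2) ∘
        fun p : Fin I₁ × Fin I₂ => (H₁ p.1, H₂ p.2)) (fun p => s₁ p.1 * s₂ p.2)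
      (fun p => A p.1 * B p.2) t =
    ∑ t₁, countSketch H₁ s₁ A t₁ * countSketch H₂ s₂ B (t - t₁)
  simp only [countSketch_comp, sum_filter_fst_add_snd_eq, countSketch_mul_countSketch]
end

section
/- Let N ≥ 1, R ≥ 1, m ≥ 1, and for each n ∈ {1,…,N} let J_n be a positive integer, H_n : [J_n] → ℤ/mℤ an arbitrary hash map, s_n : [J_n] → ℝ an arbitrary sign function, and G_n : [J_n] → ℝ^{R×R} a family of square matrices (the lateral slices of a core). Then for every t ∈ ℤ/mℤ: ∑_{(j₁,…,j_N) : H₁(j₁)+⋯+H_N(j_N)=t} (∏_{n=1}^{N} s_n(j_n)) · (G₁(j₁)·G₂(j₂)⋯G_N(j_N)) = ∑_{(t₁,…,t_N) ∈ (ℤ/mℤ)^N : t₁+⋯+t_N=t} ∏_{n=1}^{N} (∑_{j : H_n(j)=t_n} s_n(j) G_n(j)), where products of matrices are taken in the order n = 1,…,N. -/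
/-! Expanding the ordered product of the CountSketches by multilinearity gives a sum over all
index tuples `j` with `H n (j n) = τ n` for every `n`; summing over the bucket tuples `τ` with
`∑ n, τ n = t` regroups these fibres into exactly the tuples whose combined hash is `t`.
The signs pull out of the ordered product because real scalars are central. -/

open Finset

section OrderedProduct

variable {R A : Type*} [CommSemiring R] [Semiring A] [Algebra R A] {N : ℕ}

theorem List.prod_ofFn_smul (c : Fin N → R) (a : Fin N → A) :
    (List.ofFn fun n => c n • a n).prod = (∏ n, c n) • (List.ofFn a).prod := by
  simpa only [MultilinearMap.mkPiAlgebraFin_apply] using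
    (MultilinearMap.mkPiAlgebraFin R N A).map_smul_univ c a

end OrderedProduct

theorem List.prod_ofFn_sum {A : Type*} [Semiring A] {N : ℕ} {κ : Fin N → Type*}
    [∀ n, DecidableEq (κ n)] (S : ∀ n, Finset (κ n)) (a : ∀ n, κ n → A) :
    (List.ofFn fun n => ∑ j ∈ S n, a n j).prod
      = ∑ j ∈ Fintype.piFinset S, (List.ofFn fun n => a n (j n)).prod := by
  simpa only [MultilinearMap.mkPiAlgebraFin_apply] using
    (MultilinearMap.mkPiAlgebraFin ℕ N A).map_sum_finset a S

theorem sum_hash_fiber_prod_ofFn_eq_convolution {A β : Type*} [Semiring A]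
    [AddCommMonoid β] [Fintype β] [DecidableEq β] {N : ℕ} {κ : Fin N → Type*}
    [∀ n, Fintype (κ n)] [∀ n, DecidableEq (κ n)]
    (h : ∀ n, κ n → β) (a : ∀ n, κ n → A) (t : β) :
    ∑ j ∈ univ.filter (fun j : ∀ n, κ n => ∑ n, h n (j n) = t),
        (List.ofFn fun n => a n (j n)).prod
      = ∑ τ ∈ univ.filter (fun τ : Fin N → β => ∑ n, τ n = t),
          (List.ofFn fun n => ∑ j ∈ univ.filter (fun j => h n j = τ n), a n j).prod := by
  have piFinset_fibers (τ : Fin N → β) :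
      Fintype.piFinset (fun n => univ.filter (fun j => h n j = τ n))
        = univ.filter (fun j : ∀ n, κ n => (fun n => h n (j n)) = τ) := by
    ext j
    simp [Fintype.mem_piFinset, funext_iff]
  simp only [List.prod_ofFn_sum, piFinset_fibers]
  rw [sum_fiberwise_eq_sum_filter]
  simp

theorem tensorSketch_subchainN_eq_cyclicConv_general
    (N R m : ℕ) [NeZero m]
    (J : Fin N → ℕ)
    (H : ∀ n : Fin N, Fin (J n) → ZMod m)
    (s : ∀ n : Fin N, Fin (J n) → ℝ)
    (G : ∀ n : Fin N, Fin (J n) → Matrix (Fin R) (Fin R) ℝ) :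
    ∀ t : ZMod m,
      (∑ j ∈ Finset.univ.filter
            (fun j : (∀ n : Fin N, Fin (J n)) => (∑ n : Fin N, H n (j n)) = t),
          (∏ n : Fin N, s n (j n)) • ((List.finRange N).map (fun n => G n (j n))).prod)
        = ∑ τ ∈ Finset.univ.filter
              (fun τ : Fin N → ZMod m => (∑ n : Fin N, τ n) = t),
            ((List.finRange N).map
              (fun n => ∑ j ∈ Finset.univ.filter (fun j : Fin (J n) => H n j = τ n),
                s n j • G n j)).prod := by
  intro t
  simp only [← List.ofFn_eq_map, ← List.prod_ofFn_smul]
  exact sum_hash_fiber_prod_ofFn_eq_convolution H (fun n j => s n j • G n j) t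

/-- General-`N` algebraic content of Proposition 3.7: the TensorSketch of the mode-2
subchain product of `N` cores is the `N`-fold cyclic convolution of the individual
CountSketches. -/
theorem tensorSketch_subchainN_eq_cyclicConv
    (N R m : ℕ) (hN : 1 ≤ N) (hR : 1 ≤ R) [NeZero m]
    (J : Fin N → ℕ) (hJ : ∀ n, 0 < J n)
    (H : ∀ n : Fin N, Fin (J n) → ZMod m)
    (s : ∀ n : Fin N, Fin (J n) → ℝ)
    (G : ∀ n : Fin N, Fin (J n) → Matrix (Fin R) (Fin R) ℝ) :
    ∀ t : ZMod m,
      (∑ j ∈ Finset.univ.filter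
            (fun j : (∀ n : Fin N, Fin (J n)) => (∑ n : Fin N, H n (j n)) = t),
          (∏ n : Fin N, s n (j n)) • ((List.finRange N).map (fun n => G n (j n))).prod)
        = ∑ τ ∈ Finset.univ.filter
              (fun τ : Fin N → ZMod m => (∑ n : Fin N, τ n) = t),
            ((List.finRange N).map
              (fun n => ∑ j ∈ Finset.univ.filter (fun j : Fin (J n) => H n j = τ n),
                s n j • G n j)).prod :=
  tensorSketch_subchainN_eq_cyclicConv_general N R m J H s G
end
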